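/- Let (G, B₁, B₂) be a Rota-Baxter system of groups with descendent operation ∘. For t ∈ G, let e_t = B₁(t)^{-1}tB₂(t)^{-1} and G_t = {a ∈ G | a ∘ e_t = a}. Then G_t coincides with G ∘ e_t = {a ∘ e_t | a ∈ G} and (G_t, ∘) is a group with identity e_t. -/

import Mathlib

/-!
The descendent operation is associative, and `B₁`, `B₂` turn it into multiplication in `G`
(resp. `Gᵐᵒᵖ`). Since `t ∘ e_t = t`, cancelling `B₁ t` and `B₂ t` gives `B₁ e_t = B₂ e_t = 1`,
so `e_t` is a left identity and an idempotent for `∘`. Its right fixed points are then exactly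
the right multiples `G ∘ e_t`, they are closed under `∘`, and `a` has the inverse
`B₁(a)⁻¹ e_t B₂(a)⁻¹` there.
-/

namespace RotaBaxterSystem

variable {G : Type*} [Group G] {B₁ B₂ : G → G}

def descendent (B₁ B₂ : G → G) (a b : G) : G := B₁ a * b * B₂ a

structure IsRotaBaxterSystem (B₁ B₂ : G → G) : Prop where
  B₁_descendent : ∀ a b, B₁ a * B₁ b = B₁ (descendent B₁ B₂ a b)
  B₂_descendent : ∀ a b, B₂ b * B₂ a = B₂ (descendent B₁ B₂ a b)

theorem descendent_assoc (h : IsRotaBaxterSystem B₁ B₂) (a b c : G) :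
    descendent B₁ B₂ (descendent B₁ B₂ a b) c =
      descendent B₁ B₂ a (descendent B₁ B₂ b c) := by
  rw [descendent, ← h.B₁_descendent, ← h.B₂_descendent]
  simp only [descendent]
  group

theorem B₁_eq_one_of_descendent_eq_self (h : IsRotaBaxterSystem B₁ B₂) {a b : G}
    (hab : descendent B₁ B₂ a b = a) : B₁ b = 1 :=
  mul_eq_left.mp ((h.B₁_descendent a b).trans (congrArg B₁ hab))

theorem B₂_eq_one_of_descendent_eq_self (h : IsRotaBaxterSystem B₁ B₂) {a b : G}
    (hab : descendent B₁ B₂ a b = a) : B₂ b = 1 :=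
  mul_eq_right.mp ((h.B₂_descendent a b).trans (congrArg B₂ hab))

theorem descendent_eq_of_B₁_B₂_eq_one {e : G} (h₁ : B₁ e = 1) (h₂ : B₂ e = 1) (x : G) :
    descendent B₁ B₂ e x = x := by
  simp [descendent, h₁, h₂]

theorem descendent_inv_mul_mul_inv (t : G) :
    descendent B₁ B₂ t ((B₁ t)⁻¹ * t * (B₂ t)⁻¹) = t := by
  simp only [descendent]
  group

theorem descendent_eq_of_descendent_eq_self (h : IsRotaBaxterSystem B₁ B₂) {t e : G}
    (hte : descendent B₁ B₂ t e = t) (x : G) : descendent B₁ B₂ e x = x :=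
  descendent_eq_of_B₁_B₂_eq_one (B₁_eq_one_of_descendent_eq_self h hte)
    (B₂_eq_one_of_descendent_eq_self h hte) x

theorem setOf_descendent_eq_self_eq_range (h : IsRotaBaxterSystem B₁ B₂) {e : G}
    (hee : descendent B₁ B₂ e e = e) :
    {a | descendent B₁ B₂ a e = a} = {x | ∃ a, x = descendent B₁ B₂ a e} := by
  ext x
  constructor
  · intro hx
    exact ⟨x, hx.symm⟩
  · rintro ⟨a, rfl⟩
    exact (descendent_assoc h a e e).trans (congrArg _ hee)

theorem exists_descendent_inverse (h : IsRotaBaxterSystem B₁ B₂) {e a : G} (h₁ : B₁ e = 1)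
    (h₂ : B₂ e = 1) (ha : descendent B₁ B₂ a e = a) :
    ∃ b, descendent B₁ B₂ b e = b ∧ descendent B₁ B₂ a b = e ∧ descendent B₁ B₂ b a = e := by
  set b := (B₁ a)⁻¹ * e * (B₂ a)⁻¹
  have hab : descendent B₁ B₂ a b = e := by
    simp only [b, descendent]
    group
  have hb₁ : B₁ b = (B₁ a)⁻¹ :=
    eq_inv_of_mul_eq_one_right ((h.B₁_descendent a b).trans (hab ▸ h₁))
  have hb₂ : B₂ b = (B₂ a)⁻¹ :=
    eq_inv_of_mul_eq_one_left ((h.B₂_descendent a b).trans (hab ▸ h₂))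
  refine ⟨b, ?_, hab, ?_⟩
  · simp only [descendent, hb₁, hb₂, b]
  · calc descendent B₁ B₂ b a = (B₁ a)⁻¹ * descendent B₁ B₂ a e * (B₂ a)⁻¹ := by
          rw [descendent, hb₁, hb₂, ha]
      _ = e := by
          simp only [descendent]
          group

end RotaBaxterSystem

open RotaBaxterSystem in
theorem stmt_14 {G : Type*} [Group G] (B₁ B₂ : G → G)
    (h1 : ∀ a b : G, B₁ a * B₁ b = B₁ (B₁ a * b * B₂ a))
    (h2 : ∀ a b : G, B₂ b * B₂ a = B₂ (B₁ a * b * B₂ a))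
    (circ : G → G → G) (hcirc : ∀ a b, circ a b = B₁ a * b * B₂ a)
    (t : G) (e : G) (he : e = (B₁ t)⁻¹ * t * (B₂ t)⁻¹)
    (Gt : Set G) (hGt : Gt = {a : G | circ a e = a}) :
    Gt = {x : G | ∃ a : G, x = circ a e} ∧
    e ∈ Gt ∧
    (∀ a ∈ Gt, ∀ b ∈ Gt, circ a b ∈ Gt) ∧
    (∀ a ∈ Gt, circ e a = a ∧ circ a e = a) ∧
    (∀ a ∈ Gt, ∃ b ∈ Gt, circ a b = e ∧ circ b a = e) := by
  obtain rfl : circ = descendent B₁ B₂ := funext₂ hcirc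
  subst he hGt
  have h : IsRotaBaxterSystem B₁ B₂ := ⟨h1, h2⟩
  have hte := descendent_inv_mul_mul_inv (B₁ := B₁) (B₂ := B₂) t
  set e := (B₁ t)⁻¹ * t * (B₂ t)⁻¹
  have he_left_id := descendent_eq_of_descendent_eq_self h hte
  refine ⟨setOf_descendent_eq_self_eq_range h (he_left_id e), he_left_id e, ?_,
    fun a ha => ⟨he_left_id a, ha⟩, fun a ha => ?_⟩
  · intro a _ b hb
    exact (descendent_assoc h a b e).trans (congrArg _ hb)
  · exact exists_descendent_inverse h (B₁_eq_one_of_descendent_eq_self h hte)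
      (B₂_eq_one_of_descendent_eq_self h hte) ha
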